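/- arXiv:2003.10347 — 3 statements merged into one kernel-verified Lean document; each statement's English description precedes it below -/
import Mathlib

section
/- (Measurement update over-approximation.) Let Z(ĉ,Ĝ) be a zonotope in ℝⁿ with ĉ ∈ ℝⁿ and Ĝ ∈ ℝ^{n×e}. For j = 1,…,m let Hⱼ ∈ ℝ^{p×n}, yⱼ ∈ ℝᵖ, let rⱼ ∈ ℝᵖ be a vector with nonnegative entries, let Sⱼ = { x ∈ ℝⁿ : |(Hⱼ x − yⱼ)ᵢ| ≤ (rⱼ)ᵢ for all i = 1,…,p } be the corresponding strip, and let λⱼ ∈ ℝ^{n×p} be an arbitrary design matrix. Define c̄ = ĉ + Σⱼ₌₁^m λⱼ (yⱼ − Hⱼ ĉ) and Ḡ = [(I − Σⱼ₌₁^m λⱼ Hⱼ) Ĝ, λ₁ diag(r₁), …, λ_m diag(r_m)] ∈ ℝ^{n×(e+mp)} (horizontal concatenation). Then Z(ĉ,Ĝ) ∩ S₁ ∩ ⋯ ∩ S_m ⊆ Z(c̄, Ḡ). -/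
/-!
Each strip `Sⱼ` is the zonotope `Z(yⱼ, diag rⱼ)` pulled back along `Hⱼ`. Writing
`x = (I - Σⱼ λⱼ Hⱼ) x + Σⱼ λⱼ (Hⱼ x)`, the first summand lies in the linear image
`Z((I - Σⱼ λⱼ Hⱼ) ĉ, (I - Σⱼ λⱼ Hⱼ) Ĝ)` and the `j`-th term of the sum in `Z(λⱼ yⱼ, λⱼ diag rⱼ)`;
the Minkowski sum of zonotopes is the zonotope with summed centers and concatenated generators,
and its center simplifies to `c̄`.
-/

open Matrix

/-- A zonotope with center `c` and generator matrix `G`. -/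
def Zonotope {n ι : Type*} [Fintype ι] (c : n → ℝ) (G : Matrix n ι ℝ) : Set (n → ℝ) :=
  { x | ∃ z : ι → ℝ, (∀ i, |z i| ≤ 1) ∧ x = c + G.mulVec z }

section Zonotope

variable {n n' ι ι' : Type*} [Fintype ι] [Fintype ι']

theorem mulVec_mem_zonotope [Fintype n] {c x : n → ℝ} {G : Matrix n ι ℝ}
    (A : Matrix n' n ℝ) (hx : x ∈ Zonotope c G) :
    A *ᵥ x ∈ Zonotope (A *ᵥ c) (A * G) := by
  obtain ⟨z, hz, rfl⟩ := hx
  exact ⟨z, hz, by rw [mulVec_add, mulVec_mulVec]⟩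

theorem add_mem_zonotope_fromCols {c c' x x' : n → ℝ} {G : Matrix n ι ℝ} {G' : Matrix n ι' ℝ}
    (hx : x ∈ Zonotope c G) (hx' : x' ∈ Zonotope c' G') :
    x + x' ∈ Zonotope (c + c') (fromCols G G') := by
  obtain ⟨z, hz, rfl⟩ := hx
  obtain ⟨z', hz', rfl⟩ := hx'
  refine ⟨Sum.elim z z', Sum.forall.2 ⟨hz, hz'⟩, ?_⟩
  rw [fromCols_mulVec_sumElim]
  abel

theorem sum_mem_zonotope {J : Type*} [Fintype J] {c x : J → n → ℝ} {G : J → Matrix n ι ℝ}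
    (hx : ∀ j, x j ∈ Zonotope (c j) (G j)) :
    ∑ j, x j ∈ Zonotope (∑ j, c j) (of fun i (jk : J × ι) => G jk.1 i jk.2) := by
  choose z hz hxz using hx
  refine ⟨fun jk => z jk.1 jk.2, fun jk => hz jk.1 jk.2, ?_⟩
  have hmul : (of fun i (jk : J × ι) => G jk.1 i jk.2) *ᵥ (fun jk => z jk.1 jk.2)
      = ∑ j, G j *ᵥ z j := by
    ext i
    simp only [mulVec, dotProduct, of_apply, Fintype.sum_prod_type, Finset.sum_apply]
  rw [hmul, ← Finset.sum_add_distrib]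
  exact Finset.sum_congr rfl fun j _ => hxz j

theorem mem_zonotope_diagonal_of_abs_sub_le [DecidableEq ι] {u y r : ι → ℝ}
    (h : ∀ i, |u i - y i| ≤ r i) : u ∈ Zonotope y (diagonal r) := by
  refine ⟨fun i => (u i - y i) / r i, fun i => ?_, ?_⟩
  · rw [abs_div]
    exact div_le_one_of_le₀ ((h i).trans (le_abs_self _)) (abs_nonneg _)
  · ext i
    rw [Pi.add_apply, mulVec_diagonal]
    by_cases hr : r i = 0
    · -- a zero-width coordinate forces `u i = y i`, whatever the junk quotient `/ 0` is
      have : u i - y i = 0 := abs_nonpos_iff.mp (hr ▸ h i)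
      rw [hr, zero_mul]
      linarith
    · rw [mul_div_cancel₀ _ hr]
      ring

end Zonotope

theorem one_sub_sum_mul_mulVec_add {n p J : Type*} [Fintype n] [DecidableEq n] [Fintype p]
    [Fintype J] (L : J → Matrix n p ℝ) (H : J → Matrix p n ℝ) (v : n → ℝ) :
    (1 - ∑ j, L j * H j) *ᵥ v + ∑ j, L j *ᵥ (H j *ᵥ v) = v := by
  simp only [sub_mulVec, one_mulVec, sum_mulVec, mulVec_mulVec, sub_add_cancel]

theorem measurement_update_over_approximation_general {n e p m : ℕ}
    (chat : Fin n → ℝ) (Ghat : Matrix (Fin n) (Fin e) ℝ)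
    (H : Fin m → Matrix (Fin p) (Fin n) ℝ) (y : Fin m → Fin p → ℝ)
    (r : Fin m → Fin p → ℝ)
    (lam : Fin m → Matrix (Fin n) (Fin p) ℝ)
    (S : Fin m → Set (Fin n → ℝ))
    (hS : ∀ j, S j = { x | ∀ i, |((H j).mulVec x - y j) i| ≤ r j i })
    (cbar : Fin n → ℝ)
    (hcbar : cbar = chat + ∑ j, (lam j).mulVec (y j - (H j).mulVec chat))
    (Gbar : Matrix (Fin n) (Fin e ⊕ Fin m × Fin p) ℝ)
    (hGbar : Gbar = Matrix.fromCols ((1 - ∑ j, lam j * H j) * Ghat)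
      (Matrix.of fun i jk => (lam jk.1 * Matrix.diagonal (r jk.1)) i jk.2)) :
    Zonotope chat Ghat ∩ ⋂ j, S j ⊆ Zonotope cbar Gbar := by
  rintro x ⟨hx, hxS⟩
  have hHx : ∀ j, H j *ᵥ x ∈ Zonotope (y j) (diagonal (r j)) := fun j =>
    mem_zonotope_diagonal_of_abs_sub_le (by simpa [hS] using Set.mem_iInter.mp hxS j)
  have hmem := add_mem_zonotope_fromCols (mulVec_mem_zonotope (1 - ∑ j, lam j * H j) hx)
    (sum_mem_zonotope fun j => mulVec_mem_zonotope (lam j) (hHx j))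
  rw [one_sub_sum_mul_mulVec_add] at hmem
  rw [hcbar, hGbar]
  convert hmem using 2
  simp only [mulVec_sub, Finset.sum_sub_distrib, sub_mulVec, one_mulVec, sum_mulVec,
    mulVec_mulVec]
  abel

/-- Measurement update over-approximation: the intersection of a zonotope with a family of
measurement strips is contained in the zonotope with center
`c̄ = ĉ + Σⱼ λⱼ (yⱼ − Hⱼ ĉ)` and generator matrix
`Ḡ = [(I − Σⱼ λⱼ Hⱼ) Ĝ, λ₁ diag(r₁), …, λ_m diag(r_m)]`. -/
theorem measurement_update_over_approximation {n e p m : ℕ}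
    (chat : Fin n → ℝ) (Ghat : Matrix (Fin n) (Fin e) ℝ)
    (H : Fin m → Matrix (Fin p) (Fin n) ℝ) (y : Fin m → Fin p → ℝ)
    (r : Fin m → Fin p → ℝ) (hr : ∀ j i, 0 ≤ r j i)
    (lam : Fin m → Matrix (Fin n) (Fin p) ℝ)
    (S : Fin m → Set (Fin n → ℝ))
    (hS : ∀ j, S j = { x | ∀ i, |((H j).mulVec x - y j) i| ≤ r j i })
    (cbar : Fin n → ℝ)
    (hcbar : cbar = chat + ∑ j, (lam j).mulVec (y j - (H j).mulVec chat))
    (Gbar : Matrix (Fin n) (Fin e ⊕ Fin m × Fin p) ℝ)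
    (hGbar : Gbar = Matrix.fromCols ((1 - ∑ j, lam j * H j) * Ghat)
      (Matrix.of fun i jk => (lam jk.1 * Matrix.diagonal (r jk.1)) i jk.2)) :
    Zonotope chat Ghat ∩ ⋂ j, S j ⊆ Zonotope cbar Gbar :=
  measurement_update_over_approximation_general chat Ghat H y r lam S hS cbar hcbar Gbar hGbar
end

section
/- (Set-based diffusion: over-approximation of a zonotope intersection.) For j = 1,…,m let Z(cⱼ,Gⱼ) be zonotopes in ℝⁿ with cⱼ ∈ ℝⁿ and Gⱼ ∈ ℝ^{n×eⱼ}, and let w₁,…,w_m be real weights with Σⱼ₌₁^m wⱼ ≠ 0. Define c̀ = (Σⱼ₌₁^m wⱼ cⱼ) / (Σⱼ₌₁^m wⱼ) and G̀ = (1 / Σⱼ₌₁^m wⱼ) · [w₁ G₁, …, w_m G_m] ∈ ℝ^{n×(e₁+⋯+e_m)} (horizontal concatenation of the scaled generator matrices). Then Z(c₁,G₁) ∩ ⋯ ∩ Z(c_m,G_m) ⊆ Z(c̀, G̀). -/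
open Matrix

/-- Set-based diffusion: the intersection of zonotopes `Z(cⱼ, Gⱼ)` is over-approximated by
the zonotope with center `(Σⱼ wⱼ cⱼ) / (Σⱼ wⱼ)` and generator matrix
`(1 / Σⱼ wⱼ) [w₁ G₁, …, w_m G_m]`, provided `Σⱼ wⱼ ≠ 0`. -/
theorem zonotope_diffusion_intersection {n m : ℕ} {e : Fin m → ℕ}
    (c : ∀ j : Fin m, Fin n → ℝ) (G : ∀ j : Fin m, Matrix (Fin n) (Fin (e j)) ℝ)
    (w : Fin m → ℝ) (hw : ∑ j, w j ≠ 0)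
    (cgrave : Fin n → ℝ) (hc : cgrave = (∑ j, w j)⁻¹ • ∑ j, w j • c j)
    (Ggrave : Matrix (Fin n) (Σ j : Fin m, Fin (e j)) ℝ)
    (hG : Ggrave = Matrix.of fun i jk => (∑ j, w j)⁻¹ * (w jk.1 * G jk.1 i jk.2)) :
    (⋂ j, Zonotope (c j) (G j)) ⊆ Zonotope cgrave Ggrave := by
  intro x hx
  simp only [Set.mem_iInter] at hx
  choose z hz hxz using hx
  refine ⟨fun jk => z jk.1 jk.2, fun jk => hz jk.1 jk.2, ?_⟩
  funext i
  have key : ∀ j, x i = c j i + ∑ k, G j i k * z j k := by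
    intro j
    have := congrFun (hxz j) i
    simpa [mulVec, dotProduct] using this
  have hx' : (∑ j, w j) * x i = ∑ j, w j * (c j i + ∑ k, G j i k * z j k) := by
    rw [Finset.sum_mul]
    exact Finset.sum_congr rfl fun j _ => by rw [← key j]
  have : x i = (∑ j, w j)⁻¹ * ∑ j, w j * (c j i + ∑ k, G j i k * z j k) := by
    field_simp at hx' ⊢
    linarith [hx']
  rw [this, hc, hG]
  simp only [Pi.add_apply, Pi.smul_apply, Finset.sum_apply, smul_eq_mul, mulVec, dotProduct,
    Matrix.of_apply]
  rw [← Finset.univ_sigma_univ, Finset.sum_sigma, Finset.mul_sum, Finset.mul_sum,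
    ← Finset.sum_add_distrib]
  refine Finset.sum_congr rfl fun j _ => ?_
  rw [mul_add, mul_add, Finset.mul_sum, Finset.mul_sum]
  congr 1
  refine Finset.sum_congr rfl fun k _ => ?_
  ring
end

section
/- (Optimal observer gain.) Let F ∈ ℝ^{n×n}, G ∈ ℝ^{n×e}, Γ ∈ ℝ^{q×n}, and for r = 1,…,m let B_r ∈ ℝ^{q×p_r}. Define f : ℝ^{n×q} → ℝ by f(Λ) = tr((F − Λ Γ) G Gᵀ (F − Λ Γ)ᵀ) + Σᵣ₌₁^m tr(Λ B_r B_rᵀ Λᵀ), and set M = Γ G Gᵀ Γᵀ + Σᵣ₌₁^m B_r B_rᵀ ∈ ℝ^{q×q}. If M is invertible, then the gain Λ* = F G Gᵀ Γᵀ M⁻¹ is a global minimizer of f: for every Λ ∈ ℝ^{n×q}, f(Λ) ≥ f(Λ*). -/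
open Matrix

lemma tr_mul_transpose_self_nonneg {a b : ℕ} (A : Matrix (Fin a) (Fin b) ℝ) :
    0 ≤ Matrix.trace (A * Aᵀ) := by
  simp only [Matrix.trace, Matrix.diag, Matrix.mul_apply, Matrix.transpose_apply]
  exact Finset.sum_nonneg fun i _ => Finset.sum_nonneg fun j _ => mul_self_nonneg _

/-- Optimal observer gain: if `M = Γ G Gᵀ Γᵀ + Σᵣ B_r B_rᵀ` is invertible, then
`Λ* = F G Gᵀ Γᵀ M⁻¹` is a global minimizer of
`f(Λ) = tr((F − Λ Γ) G Gᵀ (F − Λ Γ)ᵀ) + Σᵣ tr(Λ B_r B_rᵀ Λᵀ)`. -/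
theorem optimal_observer_gain {n e q m : ℕ} {p : Fin m → ℕ}
    (F : Matrix (Fin n) (Fin n) ℝ) (G : Matrix (Fin n) (Fin e) ℝ)
    (Γ : Matrix (Fin q) (Fin n) ℝ) (B : ∀ r : Fin m, Matrix (Fin q) (Fin (p r)) ℝ)
    (f : Matrix (Fin n) (Fin q) ℝ → ℝ)
    (hf : ∀ Λ, f Λ = Matrix.trace ((F - Λ * Γ) * G * Gᵀ * (F - Λ * Γ)ᵀ)
      + ∑ r, Matrix.trace (Λ * B r * (B r)ᵀ * Λᵀ))
    (M : Matrix (Fin q) (Fin q) ℝ)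
    (hM : M = Γ * G * Gᵀ * Γᵀ + ∑ r, B r * (B r)ᵀ)
    (hMinv : IsUnit M)
    (Λstar : Matrix (Fin n) (Fin q) ℝ)
    (hΛstar : Λstar = F * G * Gᵀ * Γᵀ * M⁻¹) :
    ∀ Λ : Matrix (Fin n) (Fin q) ℝ, f Λ ≥ f Λstar := by
  have hdet : IsUnit M.det := (Matrix.isUnit_iff_isUnit_det M).mp hMinv
  have hM1 : Λstar * M = F * G * Gᵀ * Γᵀ := by
    rw [hΛstar, Matrix.mul_assoc _ M⁻¹ M, Matrix.nonsing_inv_mul M hdet, Matrix.mul_one]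
  have hMsym : Mᵀ = M := by
    rw [hM]
    simp only [Matrix.transpose_add, Matrix.transpose_sum, Matrix.transpose_mul,
      Matrix.transpose_transpose, ← Matrix.mul_assoc]
  have hM2 : M * Λstarᵀ = Γ * G * Gᵀ * Fᵀ := by
    have h := congrArg Matrix.transpose hM1
    simp only [Matrix.transpose_mul, Matrix.transpose_transpose, hMsym, ← Matrix.mul_assoc] at h
    exact h
  have e1 : Γ * (G * (Gᵀ * Fᵀ)) = M * Λstarᵀ := by
    rw [← Matrix.mul_assoc, ← Matrix.mul_assoc]; exact hM2.symm
  have e2 : F * (G * (Gᵀ * Γᵀ)) = Λstar * M := by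
    rw [← Matrix.mul_assoc, ← Matrix.mul_assoc]; exact hM1.symm
  have expand : ∀ Λ : Matrix (Fin n) (Fin q) ℝ, f Λ =
      Matrix.trace (F * (G * (Gᵀ * Fᵀ))) - Matrix.trace (Λ * (M * Λstarᵀ))
        - Matrix.trace (Λstar * (M * Λᵀ)) + Matrix.trace (Λ * (M * Λᵀ)) := by
    intro Λ
    have e2' : Λstar * (M * Λᵀ) = F * (G * (Gᵀ * (Γᵀ * Λᵀ))) := by
      rw [← Matrix.mul_assoc, ← e2]; simp only [Matrix.mul_assoc]
    have h1 : (F - Λ * Γ) * G * Gᵀ * (F - Λ * Γ)ᵀ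
        = F * (G * (Gᵀ * Fᵀ)) - Λ * (M * Λstarᵀ) - Λstar * (M * Λᵀ)
          + Λ * (Γ * (G * (Gᵀ * (Γᵀ * Λᵀ)))) := by
      rw [← e1, e2']
      simp only [Matrix.transpose_sub, Matrix.transpose_mul, Matrix.sub_mul,
        Matrix.mul_sub, Matrix.mul_assoc]
      abel
    have h2 : Λ * (M * Λᵀ) = Λ * (Γ * (G * (Gᵀ * (Γᵀ * Λᵀ))))
        + ∑ r, Λ * (B r * ((B r)ᵀ * Λᵀ)) := by
      rw [hM]
      simp only [Matrix.add_mul, Matrix.mul_add, Matrix.sum_mul, Matrix.mul_sum, Matrix.mul_assoc]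
    have h2t : Matrix.trace (Λ * (M * Λᵀ))
        = Matrix.trace (Λ * (Γ * (G * (Gᵀ * (Γᵀ * Λᵀ)))))
          + ∑ r, Matrix.trace (Λ * (B r * ((B r)ᵀ * Λᵀ))) := by
      rw [h2, Matrix.trace_add, Matrix.trace_sum]
    rw [hf, h1, h2t]
    simp only [Matrix.trace_add, Matrix.trace_sub, Matrix.mul_assoc]
    ring
  intro Λ
  have h3 : (Λ - Λstar) * M * (Λ - Λstar)ᵀ
      = Λ * (M * Λᵀ) - Λ * (M * Λstarᵀ) - Λstar * (M * Λᵀ) + Λstar * (M * Λstarᵀ) := by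
    simp only [Matrix.transpose_sub, Matrix.sub_mul, Matrix.mul_sub, Matrix.mul_assoc]
    abel
  have hkey : f Λ = f Λstar + Matrix.trace ((Λ - Λstar) * M * (Λ - Λstar)ᵀ) := by
    rw [expand Λ, expand Λstar, h3]
    simp only [Matrix.trace_add, Matrix.trace_sub]
    ring
  have hD : 0 ≤ Matrix.trace ((Λ - Λstar) * M * (Λ - Λstar)ᵀ) := by
    set D := Λ - Λstar with hDdef
    have hsplit : D * M * Dᵀ = (D * (Γ * G)) * (D * (Γ * G))ᵀ
        + ∑ r, (D * B r) * (D * B r)ᵀ := by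
      rw [hM]
      simp only [Matrix.mul_add, Matrix.add_mul, Matrix.mul_sum, Matrix.sum_mul,
        Matrix.transpose_mul, Matrix.mul_assoc]
    rw [hsplit, Matrix.trace_add, Matrix.trace_sum]
    have h1 := tr_mul_transpose_self_nonneg (D * (Γ * G))
    have hs : 0 ≤ ∑ r, Matrix.trace ((D * B r) * (D * B r)ᵀ) :=
      Finset.sum_nonneg fun r _ => tr_mul_transpose_self_nonneg _
    linarith
  rw [hkey]
  linarith
end
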